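/- Let n be a natural number, let x be an n-bit word, and let g be the map on n-bit words given by g(t) = t OR (t + 1), with addition modulo 2^n. Then iterating g exactly n − ν(x) times starting from x yields the all-ones word, and for every k < n − ν(x), iterating g only k times starting from x yields a word that is not the all-ones word. (Hence the number of iterations of t ← t OR (t + 1) needed to reach the all-ones word equals the number of zero bits of the input.) -/

import Mathlib

/-!
Each application of `t ↦ t ||| (t + 1)` to a word that is not all ones turns its lowest zero bit
into a one and changes nothing else, so `ν` grows by exactly one per step. As `ν ≤ n`, with
equality only at the all-ones word, the iteration reaches the all-ones word after exactly
`n - ν(x)` steps and not before.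
-/

/-- `nuBV x` is the number of one bits of the `n`-bit word `x`. -/
def nuBV {n : ℕ} (x : BitVec n) : ℕ := (Nat.digits 2 x.toNat).sum

namespace Nat

theorem digits_sum_add_mul {b : ℕ} (hb : 1 < b) {r : ℕ} (hr : r < b) (q : ℕ) :
    (digits b (r + b * q)).sum = r + (digits b q).sum := by
  rcases eq_or_ne r 0 with rfl | hr0
  · rcases eq_or_ne q 0 with rfl | hq0
    · simp
    · rw [digits_add b hb 0 q hr (Or.inr hq0), List.sum_cons]
  · rw [digits_add b hb r q hr (Or.inl hr0), List.sum_cons]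

theorem digits_sum_eq_mod_add_div {b : ℕ} (hb : 1 < b) (m : ℕ) :
    (digits b m).sum = m % b + (digits b (m / b)).sum := by
  conv_lhs => rw [← mod_add_div m b]
  exact digits_sum_add_mul hb (mod_lt m (by omega)) _

theorem digits_sum_le_of_lt_pow {b n m : ℕ} (hb : 1 < b) (hm : m < b ^ n) :
    (digits b m).sum ≤ (b - 1) * n := by
  calc (digits b m).sum ≤ (digits b m).length • (b - 1) :=
        List.sum_le_card_nsmul _ _ fun d hd => le_sub_one_of_lt (digits_lt_base hb hd)
    _ ≤ (b - 1) * n := by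
        rw [smul_eq_mul, mul_comm]
        exact Nat.mul_le_mul_left _ ((digits_length_le_iff hb m).mpr hm)

theorem sub_one_add_mul_pow_sub_one {b : ℕ} (hb : 0 < b) (n : ℕ) :
    b - 1 + b * (b ^ n - 1) = b ^ (n + 1) - 1 := by
  have : b ≤ b * b ^ n := Nat.le_mul_of_pos_right b (Nat.pow_pos hb)
  rw [Nat.mul_sub_one, pow_succ']
  omega

theorem digits_sum_eq_iff_of_lt_pow {b n m : ℕ} (hb : 1 < b) (hm : m < b ^ n) :
    (digits b m).sum = (b - 1) * n ↔ m = b ^ n - 1 := by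
  induction n generalizing m with
  | zero => simp_all
  | succ n ih =>
    have hdiv : m / b < b ^ n := (Nat.div_lt_iff_lt_mul (by omega)).mpr (by rwa [← pow_succ])
    have hmod : m % b < b := mod_lt m (by omega)
    have hle := digits_sum_le_of_lt_pow hb hdiv
    rw [digits_sum_eq_mod_add_div hb]
    calc m % b + (digits b (m / b)).sum = (b - 1) * (n + 1)
        ↔ (digits b (m / b)).sum = (b - 1) * n ∧ m % b = b - 1 := by
          rw [Nat.mul_succ]; omega
      _ ↔ m / b = b ^ n - 1 ∧ m % b = b - 1 := by rw [ih hdiv]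
      _ ↔ m = b ^ (n + 1) - 1 := by
          rw [Nat.div_mod_unique (by omega), sub_one_add_mul_pow_sub_one (by omega), eq_comm,
            and_iff_left (by omega)]

theorem two_mul_lor_two_mul_add_one (a b : ℕ) : 2 * a ||| (2 * b + 1) = 2 * (a ||| b) + 1 := by
  simpa [Nat.bit, two_mul] using Nat.lor_bit false a true b

theorem digits_two_sum_lor_succ (m : ℕ) :
    (digits 2 (m ||| (m + 1))).sum = (digits 2 m).sum + 1 := by
  induction m using Nat.strong_induction_on with
  | _ m ih =>
    have sum_even (q : ℕ) : (digits 2 (2 * q)).sum = (digits 2 q).sum := by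
      simpa using digits_sum_add_mul one_lt_two two_pos q
    have sum_odd (q : ℕ) : (digits 2 (2 * q + 1)).sum = (digits 2 q).sum + 1 := by
      rw [add_comm, digits_sum_add_mul one_lt_two one_lt_two, add_comm]
    obtain ⟨q, rfl | rfl⟩ := Nat.even_or_odd' m
    · rw [two_mul_lor_two_mul_add_one, Nat.or_self, sum_odd, sum_even]
    · rw [show 2 * q + 1 + 1 = 2 * (q + 1) by ring, Nat.lor_comm, two_mul_lor_two_mul_add_one,
        Nat.lor_comm, sum_odd, sum_odd, ih q (by omega)]

end Nat

theorem nuBV_le {n : ℕ} (x : BitVec n) : nuBV x ≤ n := by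
  simpa [nuBV] using Nat.digits_sum_le_of_lt_pow one_lt_two x.isLt

theorem nuBV_eq_iff_eq_allOnes {n : ℕ} (x : BitVec n) : nuBV x = n ↔ x = BitVec.allOnes n := by
  rw [← BitVec.toNat_inj, BitVec.toNat_allOnes, ← Nat.digits_sum_eq_iff_of_lt_pow one_lt_two x.isLt,
    nuBV, show 2 - 1 = 1 from rfl, one_mul]

theorem nuBV_or_add_one {n : ℕ} {x : BitVec n} (hx : x ≠ BitVec.allOnes n) :
    nuBV (x ||| (x + 1)) = nuBV x + 1 := by
  have hlt : x.toNat + 1 < 2 ^ n := by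
    have := x.isLt
    have : x.toNat ≠ 2 ^ n - 1 := by rwa [ne_eq, ← BitVec.toNat_allOnes, BitVec.toNat_inj]
    omega
  have hsucc : (x + 1).toNat = x.toNat + 1 := by
    simp [BitVec.toNat_add, Nat.mod_eq_of_lt hlt]
  rw [nuBV, nuBV, BitVec.toNat_or, hsucc, Nat.digits_two_sum_lor_succ]

theorem Function.apply_iterate_eq_add {α : Type*} {f : α → α} {φ : α → ℕ} {N : ℕ}
    (hf : ∀ t, φ t < N → φ (f t) = φ t + 1) {k : ℕ} {x : α} (hk : φ x + k ≤ N) :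
    φ (f^[k] x) = φ x + k := by
  induction k generalizing x with
  | zero => rfl
  | succ k ih =>
    rw [Function.iterate_succ_apply, ih (by rw [hf x (by omega)]; omega), hf x (by omega)]
    ring

/-- Iterating `g(t) = t OR (t + 1)` (addition modulo `2^n`) exactly
`n - ν(x)` times starting from the `n`-bit word `x` yields the all-ones word,
and any fewer number of iterations yields a word that is not all ones. -/
theorem or_succ_iterations (n : ℕ) (x : BitVec n) (g : BitVec n → BitVec n)
    (hg : ∀ t, g t = t ||| (t + 1)) :
    g^[n - nuBV x] x = BitVec.allOnes n ∧
      ∀ k < n - nuBV x, g^[k] x ≠ BitVec.allOnes n := by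
  have hle := nuBV_le x
  have hstep (t : BitVec n) (ht : nuBV t < n) : nuBV (g t) = nuBV t + 1 := by
    rw [hg, nuBV_or_add_one (mt (nuBV_eq_iff_eq_allOnes t).mpr ht.ne)]
  have hiter {k : ℕ} (hk : k ≤ n - nuBV x) : nuBV (g^[k] x) = nuBV x + k :=
    Function.apply_iterate_eq_add hstep (by omega)
  refine ⟨?_, fun k hk hall => ?_⟩
  · rw [← nuBV_eq_iff_eq_allOnes, hiter le_rfl]
    omega
  · have := (nuBV_eq_iff_eq_allOnes _).mpr hall
    rw [hiter hk.le] at this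
    omega
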